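/- For N = 2^n, n ≥ 2, every i at which max_{p} T(i,p,N) = m(N)+1 is achieved (with T(i,p,N) = S(i,N) + e(i-1,p)) also satisfies S(i,N) = m(N). -/
import Mathlib


/-- Number of dimension-`k` links crossing intercolumn position `i`
(least nonnegative residue mod `2^k`). -/
def f (i : ℤ) (k : ℕ) : ℤ := (i * (1 - 2 * (((i - 1) / 2 ^ (k - 1)) % 2))) % 2 ^ k

/-- Total wire density at intercolumn position `i` for `N = 2^n`. -/
def S (i : ℤ) (n : ℕ) : ℤ := ∑ k ∈ Finset.Icc 1 n, f i k

/-- The `j`-th binary digit of `i`, counting from 1 at the right. -/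
def b (i : ℤ) (j : ℕ) : ℤ := (i / 2 ^ (j - 1)) % 2

/-- Excess of 1's over 0's among bit positions `j+1, ..., n` of `i`. -/
def e (i : ℤ) (j n : ℕ) : ℤ := ∑ l ∈ Finset.Icc (j + 1) n, (2 * b i l - 1)

/-- Maximum wire density `m(N)` for `N = 2^n`. -/
def m (n : ℕ) : ℤ := (4 * 2 ^ n - (-1) ^ n - 3) / 6

/-- Leftmost maximizing position `p(N)` for `N = 2^n`. -/
def p (n : ℕ) : ℤ := (2 ^ n - (-1) ^ n) / 3


lemma b_closed (x : ℤ) (j : ℕ) :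
    b x (j+1) = if x % 2^(j+1) < 2^j then 0 else 1 := by
  have hK : (0:ℤ) < 2^j := by positivity
  have hM : (0:ℤ) < 2^(j+1) := by positivity
  have hd := Int.mul_ediv_add_emod x (2^(j+1))
  set r := x % 2^(j+1) with hrdef
  set d := x / 2^(j+1) with hddef
  have hr0 : 0 ≤ r := Int.emod_nonneg x (ne_of_gt hM)
  have hr1 : r < 2^(j+1) := Int.emod_lt_of_pos x hM
  have hM2 : (2:ℤ)^(j+1) = 2^j * 2 := by ring
  have hx : x = r + (2*d) * 2^j := by rw [hM2] at hd; linarith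
  unfold b
  simp only [Nat.add_sub_cancel]
  rw [hx, Int.add_mul_ediv_right _ _ (ne_of_gt hK), Int.add_mul_emod_self_left]
  by_cases h : r < 2^j
  · rw [Int.ediv_eq_zero_of_lt hr0 h]
    simp [h]
  · push_neg at h
    have h2 : r = (r - 2^j) + 1 * 2^j := by ring
    rw [h2, Int.add_mul_ediv_right _ _ (ne_of_gt hK),
        Int.ediv_eq_zero_of_lt (by linarith) (by rw [hM2] at hr1; linarith)]
    simp [not_lt.mpr h]

lemma f_closed (i : ℤ) (j : ℕ) :
    f i (j+1) = if (i-1) % 2^(j+1) < 2^j then (i-1) % 2^(j+1) + 1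
                else 2^(j+1) - 1 - (i-1) % 2^(j+1) := by
  have hK : (0:ℤ) < 2^j := by positivity
  have hM : (0:ℤ) < 2^(j+1) := by positivity
  have hb := b_closed (i-1) j
  unfold b at hb
  simp only [Nat.add_sub_cancel] at hb
  have hd := Int.mul_ediv_add_emod (i-1) (2^(j+1))
  set r := (i-1) % 2^(j+1) with hrdef
  set d := (i-1) / 2^(j+1) with hddef
  have hr0 : 0 ≤ r := Int.emod_nonneg _ (ne_of_gt hM)
  have hr1 : r < 2^(j+1) := Int.emod_lt_of_pos _ hM
  have hMM : (2:ℤ)^(j+1) = 2^j * 2 := by ring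
  unfold f
  simp only [Nat.add_sub_cancel]
  rw [hb]
  by_cases h : r < 2^j
  · simp only [if_pos h]
    have hi : i = (r + 1) + 2^(j+1) * d := by linarith
    rw [show i * (1 - 2*0) = i by ring, hi, Int.add_mul_emod_self_left]
    exact Int.emod_eq_of_lt (by linarith) (by linarith)
  · simp only [if_neg h]
    push_neg at h
    have hi : i * (1 - 2*1) = (2^(j+1) - 1 - r) + 2^(j+1) * (-d-1) := by linarith
    rw [hi, Int.add_mul_emod_self_left]
    exact Int.emod_eq_of_lt (by linarith) (by linarith)

lemma b01 (x : ℤ) (k : ℕ) : b x k = 0 ∨ b x k = 1 := Int.emod_two_eq _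

lemma f_bounds (i : ℤ) (j : ℕ) :
    1 - b (i-1) (j+1) ≤ f i (j+1) ∧ f i (j+1) ≤ 2^j - b (i-1) (j+1) := by
  have hK : (0:ℤ) < 2^j := by positivity
  have hM : (0:ℤ) < 2^(j+1) := by positivity
  have hMM : (2:ℤ)^(j+1) = 2^j * 2 := by ring
  have hr0 : 0 ≤ (i-1) % 2^(j+1) := Int.emod_nonneg _ (ne_of_gt hM)
  have hr1 : (i-1) % 2^(j+1) < 2^(j+1) := Int.emod_lt_of_pos _ hM
  rw [f_closed, b_closed]
  by_cases h : (i-1) % 2^(j+1) < 2^j <;> simp only [if_pos, if_neg, h, if_true, if_false] <;>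
    constructor <;> linarith

lemma f_rec_eq (i : ℤ) (j : ℕ) (h : b (i-1) (j+2) = b (i-1) (j+1)) :
    f i (j+2) = f i (j+1) := by
  have hK : (0:ℤ) < 2^j := by positivity
  have h2 : (2:ℤ)^(j+1) = 2^j * 2 := by ring
  have h4 : (2:ℤ)^(j+2) = 2^j * 4 := by ring
  have hr0 : 0 ≤ (i-1) % 2^(j+2) := Int.emod_nonneg _ (by positivity)
  have hr1 : (i-1) % 2^(j+2) < 2^(j+2) := Int.emod_lt_of_pos _ (by positivity)
  have hmm : (i-1) % 2^(j+1) = ((i-1) % 2^(j+2)) % 2^(j+1) :=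
    (Int.emod_emod_of_dvd _ ⟨2, by ring⟩).symm
  rw [b_closed, b_closed] at h
  rw [f_closed, f_closed]
  by_cases hc : (i-1) % 2^(j+2) < 2^(j+1)
  · have hr : (i-1) % 2^(j+1) = (i-1) % 2^(j+2) := by
      rw [hmm]; exact Int.emod_eq_of_lt hr0 hc
    simp only [if_pos hc] at h ⊢
    by_cases hc1 : (i-1) % 2^(j+1) < 2^j
    · simp only [if_pos hc1] at h ⊢; rw [hr]
    · simp only [if_neg hc1] at h; exact absurd h (by norm_num)
  · have hr : (i-1) % 2^(j+1) = (i-1) % 2^(j+2) - 2^(j+1) := by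
      rw [hmm, show (i-1) % 2^(j+2) = ((i-1) % 2^(j+2) - 2^(j+1)) + 2^(j+1) * 1 by ring,
        Int.add_mul_emod_self_left,
        Int.emod_eq_of_lt (show (0:ℤ) ≤ (i-1) % 2^(j+2) - 2^(j+1) by linarith [not_lt.mp hc])
          (show (i-1) % 2^(j+2) - 2^(j+1) < 2^(j+1) by linarith)]
      ring
    simp only [if_neg hc] at h ⊢
    push_neg at hc
    by_cases hc1 : (i-1) % 2^(j+1) < 2^j
    · simp only [if_pos hc1] at h; exact absurd h.symm (by norm_num)
    · simp only [if_neg hc1] at h ⊢; rw [hr]; ring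

lemma f_rec_ne (i : ℤ) (j : ℕ) (h : b (i-1) (j+2) ≠ b (i-1) (j+1)) :
    f i (j+2) = 2^(j+1) - f i (j+1) := by
  have hK : (0:ℤ) < 2^j := by positivity
  have h2 : (2:ℤ)^(j+1) = 2^j * 2 := by ring
  have h4 : (2:ℤ)^(j+2) = 2^j * 4 := by ring
  have hr0 : 0 ≤ (i-1) % 2^(j+2) := Int.emod_nonneg _ (by positivity)
  have hr1 : (i-1) % 2^(j+2) < 2^(j+2) := Int.emod_lt_of_pos _ (by positivity)
  have hmm : (i-1) % 2^(j+1) = ((i-1) % 2^(j+2)) % 2^(j+1) :=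
    (Int.emod_emod_of_dvd _ ⟨2, by ring⟩).symm
  rw [b_closed, b_closed] at h
  rw [f_closed, f_closed]
  by_cases hc : (i-1) % 2^(j+2) < 2^(j+1)
  · have hr : (i-1) % 2^(j+1) = (i-1) % 2^(j+2) := by
      rw [hmm]; exact Int.emod_eq_of_lt hr0 hc
    simp only [if_pos hc] at h ⊢
    by_cases hc1 : (i-1) % 2^(j+1) < 2^j
    · simp only [if_pos hc1] at h; exact absurd rfl h
    · simp only [if_neg hc1] at h ⊢; rw [hr]; ring
  · have hr : (i-1) % 2^(j+1) = (i-1) % 2^(j+2) - 2^(j+1) := by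
      rw [hmm, show (i-1) % 2^(j+2) = ((i-1) % 2^(j+2) - 2^(j+1)) + 2^(j+1) * 1 by ring,
        Int.add_mul_emod_self_left,
        Int.emod_eq_of_lt (show (0:ℤ) ≤ (i-1) % 2^(j+2) - 2^(j+1) by linarith [not_lt.mp hc])
          (show (i-1) % 2^(j+2) - 2^(j+1) < 2^(j+1) by linarith)]
      ring
    simp only [if_neg hc] at h ⊢
    push_neg at hc
    by_cases hc1 : (i-1) % 2^(j+1) < 2^j
    · simp only [if_pos hc1] at h ⊢; rw [hr]; ring
    · simp only [if_neg hc1] at h; exact absurd rfl h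

lemma f_one (i : ℤ) : f i 1 = 1 - b (i-1) 1 := by
  have h := f_closed i 0
  have hb := b_closed (i-1) 0
  norm_num at h hb
  have hr0 : 0 ≤ (i-1) % 2 := Int.emod_nonneg _ (by norm_num)
  have hr1 : (i-1) % 2 < 2 := Int.emod_lt_of_pos _ (by norm_num)
  rw [h, hb]
  by_cases hc : (i-1) % 2 < 1 <;> simp only [if_pos, if_neg, hc, if_true, if_false] <;> omega


lemma six_dvd (k : ℕ) : (6:ℤ) ∣ 4 * 2^k - (-1)^k - 3 := by
  induction k with
  | zero => decide
  | succ n ih =>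
    obtain ⟨c, hc⟩ := ih
    rcases Nat.even_or_odd n with h | h
    · rw [h.neg_one_pow] at hc
      refine ⟨2*c + 1, ?_⟩
      rw [pow_succ, pow_succ, h.neg_one_pow]
      linarith
    · rw [h.neg_one_pow] at hc
      refine ⟨2*c, ?_⟩
      rw [pow_succ, pow_succ, h.neg_one_pow]
      linarith

lemma m_six (k : ℕ) : 6 * m k = 4 * 2^k - (-1)^k - 3 :=
  Int.mul_ediv_cancel' (six_dvd k)

lemma neg_one_sq' (j : ℕ) : ((-1:ℤ))^(j+2) = (-1)^j := by ring

lemma m_add2 (j : ℕ) : m (j+2) = m j + 2^(j+1) := by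
  have h1 := m_six (j+2)
  have h2 := m_six j
  rw [neg_one_sq'] at h1
  have p1 : (2:ℤ)^(j+2) = 4*2^j := by ring
  have p2 : (2:ℤ)^(j+1) = 2*2^j := by ring
  linarith

lemma neg_one_cases (j : ℕ) : ((-1:ℤ))^j = 1 ∨ ((-1:ℤ))^j = -1 := neg_one_pow_eq_or ℤ j

lemma m_step (j : ℕ) : m (j+1) + 2^j ≤ m (j+2) := by
  have h1 := m_six (j+2)
  have h2 := m_six (j+1)
  have e1 : ((-1:ℤ))^(j+2) = (-1)^j := by ring
  have e2 : ((-1:ℤ))^(j+1) = -(-1)^j := by ring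
  have p1 : (2:ℤ)^(j+2) = 4*2^j := by ring
  have p2 : (2:ℤ)^(j+1) = 2*2^j := by ring
  have hp : (0:ℤ) < 2^j := by positivity
  rw [e1, p1] at h1
  rw [e2, p2] at h2
  rcases neg_one_cases j with h | h <;> rw [h] at h1 h2 <;> linarith

lemma m_step2 (j : ℕ) : m (j+2) + 2^(j+1) + 3 ≤ m (j+3) + 2 := by
  have h1 := m_six (j+3)
  have h2 := m_six (j+2)
  have e1 : ((-1:ℤ))^(j+3) = -(-1)^j := by ring
  have e2 : ((-1:ℤ))^(j+2) = (-1)^j := by ring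
  have p1 : (2:ℤ)^(j+3) = 8*2^j := by ring
  have p2 : (2:ℤ)^(j+2) = 4*2^j := by ring
  have p3 : (2:ℤ)^(j+1) = 2*2^j := by ring
  rw [e1, p1] at h1
  rw [e2, p2] at h2
  rcases neg_one_cases j with h | h <;> rw [h] at h1 h2
  · linarith [(by positivity : (0:ℤ) < 2^j)]
  · cases j with
    | zero => norm_num at h
    | succ jj =>
      have : (2:ℤ)^(jj+1) ≥ 2 := by
        have := (by positivity : (0:ℤ) < 2^jj)
        calc (2:ℤ)^(jj+1) = 2*2^jj := by ring
        _ ≥ 2*1 := by linarith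
        _ = 2 := by ring
      linarith

lemma m_zero : m 0 = 0 := by decide
lemma m_one : m 1 = 1 := by decide


lemma S_succ (i : ℤ) (k : ℕ) : S i (k+1) = S i k + f i (k+1) := by
  unfold S
  rw [Finset.sum_Icc_succ_top (Nat.succ_le_succ (Nat.zero_le k))]

lemma S_zero (i : ℤ) : S i 0 = 0 := by simp [S]

lemma e_self (x : ℤ) (q : ℕ) : e x q q = 0 := by
  unfold e
  rw [Finset.Icc_eq_empty (by omega)]
  rfl

lemma e_succ (x : ℤ) (q k : ℕ) (h : q ≤ k) : e x q (k+1) = e x q k + (2 * b x (k+1) - 1) := by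
  unfold e
  rw [Finset.sum_Icc_succ_top (by omega)]

lemma b_nonneg (x : ℤ) (k : ℕ) : 0 ≤ b x k := by rcases b01 x k with h | h <;> omega
lemma b_le_one (x : ℤ) (k : ℕ) : b x k ≤ 1 := by rcases b01 x k with h | h <;> omega

lemma S_le (i : ℤ) : ∀ k, S i k ≤ m k ∧ S i (k+1) ≤ m (k+1) := by
  intro k
  induction k with
  | zero =>
    constructor
    · rw [S_zero, m_zero]
    · rw [show (0:ℕ)+1 = 1 by rfl, m_one, show S i 1 = S i 0 + f i 1 from S_succ i 0, S_zero,
        f_one]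
      have := b_nonneg (i-1) 1
      omega
  | succ k ih =>
    refine ⟨ih.2, ?_⟩
    rw [S_succ i (k+1)]
    by_cases hb : b (i-1) (k+2) = b (i-1) (k+1)
    · rw [f_rec_eq i k hb]
      have h1 := (f_bounds i k).2
      have h2 := b_nonneg (i-1) (k+1)
      have h3 := m_step k
      linarith [ih.2]
    · rw [f_rec_ne i k hb]
      have h4 : S i (k+1) = S i k + f i (k+1) := S_succ i k
      have h5 := m_add2 k
      linarith [ih.1]

lemma V_le (i : ℤ) (q : ℕ) (hq : 1 ≤ q) : ∀ t,
    (S i (q+t) + 2 * e (i-1) q (q+t) ≤ m (q+t) + 2) ∧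
    (S i (q+t+1) + 2 * e (i-1) q (q+t+1) ≤ m (q+t+1) + 2) := by
  intro t
  induction t with
  | zero =>
    obtain ⟨j, rfl⟩ : ∃ j, q = j + 1 := ⟨q - 1, by omega⟩
    constructor
    · rw [Nat.add_zero, e_self]
      linarith [(S_le i (j+1)).1]
    · rw [Nat.add_zero, e_succ (i-1) (j+1) (j+1) le_rfl, e_self,
        S_succ i (j+1)]
      have hb1 := b_nonneg (i-1) (j+1)
      have hb2 := b_le_one (i-1) (j+1)
      have hb3 := b_nonneg (i-1) (j+2)
      have hb4 := b_le_one (i-1) (j+2)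
      by_cases hb : b (i-1) (j+2) = b (i-1) (j+1)
      · rw [f_rec_eq i j hb]
        have h1 := (f_bounds i j).2
        have h3 := m_step j
        have h4 := (S_le i (j+1)).1
        rw [hb]
        linarith
      · rw [f_rec_ne i j hb]
        have h4 : S i (j+1) = S i j + f i (j+1) := S_succ i j
        have h5 := m_add2 j
        linarith [(S_le i j).1]
  | succ t ih =>
    obtain ⟨u, hu⟩ : ∃ u, q + t = u + 1 := ⟨q + t - 1, by omega⟩
    have hqu : q ≤ u + 1 := by omega
    refine ⟨by rw [show q + (t+1) = q + t + 1 by ring]; exact ih.2, ?_⟩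
    rw [show q + (t+1) + 1 = (q+t) + 2 by ring, hu]
    have ih1 : S i (u+1) + 2 * e (i-1) q (u+1) ≤ m (u+1) + 2 := by rw [← hu]; exact ih.1
    have ih2 : S i (u+2) + 2 * e (i-1) q (u+2) ≤ m (u+2) + 2 := by
      have := ih.2; rw [hu] at this; exact this
    rw [show u + 1 + 2 = u + 3 by ring]
    rw [e_succ (i-1) q (u+2) (by omega), S_succ i (u+2)]
    have hb1 := b_nonneg (i-1) (u+2)
    have hb2 := b_le_one (i-1) (u+2)
    have hb3 := b_nonneg (i-1) (u+3)
    have hb4 := b_le_one (i-1) (u+3)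
    by_cases hb : b (i-1) (u+3) = b (i-1) (u+2)
    · rw [show u + 3 = (u+1) + 2 by ring] at hb ⊢
      rw [f_rec_eq i (u+1) hb, hb]
      have h1 := (f_bounds i (u+1)).2
      have h3 := m_step2 u
      rw [show u + 1 + 2 = u + 3 by ring] at h3 ⊢
      rw [show u + 1 + 1 = u + 2 by ring] at h1
      linarith
    · rw [show u + 3 = (u+1) + 2 by ring] at hb ⊢
      rw [f_rec_ne i (u+1) hb]
      have h4 : S i (u+2) = S i (u+1) + f i (u+2) := S_succ i (u+1)
      have h5 : e (i-1) q (u+2) = e (i-1) q (u+1) + (2 * b (i-1) (u+2) - 1) :=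
        e_succ (i-1) q (u+1) (by omega)
      have h6 : b (i-1) ((u+1)+2) + b (i-1) (u+2) = 1 := by
        rcases b01 (i-1) ((u+1)+2) with h | h <;> rcases b01 (i-1) (u+2) with h' | h' <;>
          rw [h, h'] at hb ⊢ <;> simp_all
      have h7 := m_add2 (u+1)
      rw [show u + 1 + 2 = u + 3 by ring, show u + 1 + 1 = u + 2 by ring] at h7
      linarith

theorem T_maximizers_maximize_S (n : ℕ) (hn : 2 ≤ n) (i : ℤ) (hi0 : 0 < i) (hiN : i < 2 ^ n)
    (h : ∃ q : ℕ, 1 ≤ q ∧ q ≤ n ∧ S i n + e (i - 1) q n = m n + 1) :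
    S i n = m n := by
  obtain ⟨q, hq1, hqn, hEq⟩ := h
  obtain ⟨t, rfl⟩ : ∃ t, n = q + t := ⟨n - q, by omega⟩
  have hS := (S_le i (q+t)).1
  have hV := (V_le i q hq1 t).1
  linarith
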